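/- arXiv:1201.4623 — 3 statements merged into one kernel-verified Lean document; each statement's English description precedes it below -/
import Mathlib

section
/- Let $n\ge 1$ and let $(T_{ijk})_{1\le i,j,k\le n}$ be a family of real numbers that is fully symmetric in all three indices (Codazzi symmetry). Set $H_k=\sum_i T_{iik}$. Then $(1+\tfrac{2}{n+1})\sum_k(\sum_i \lambda_i T_{iik})^2/(\sum_i\lambda_i^2) \le \sum_{i,j,k}T_{ijk}^2 + \tfrac{2n}{n+1}\sum_k H_k^2$ whenever $\sum_i\lambda_i^2>0$, where $(\lambda_i)$ are arbitrary reals. More precisely, with $D_k := \sum_i \lambda_i T_{iik}$ and $|Z|^2=\sum_i\lambda_i^2$, one has $(1+\tfrac{2}{n+1})\,\frac{\sum_k D_k^2}{|Z|^2} \le \sum_{i,j,k}T_{ijk}^2 + \tfrac{2n}{n+1}\sum_k H_k^2$. -/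
/-!
Write `P = ∑ₖ T_kkk²` and `B = ∑ₖ ∑_{i ≠ k} T_iik²`. Cauchy–Schwarz in `i` bounds
`∑ₖ Dₖ² / |λ|²` by `∑ₖ ∑ᵢ T_iik² = P + B`. By full symmetry each off-diagonal entry `T_iik`
occurs three times in `|T|²` (as `T_iik`, `T_iki`, `T_kii`), so `P + 3B ≤ |T|²`. Finally
`T_kkk = Hₖ - ∑_{i ≠ k} T_iik` is a sum of `n` terms, so `P ≤ n (|H|² + B)`. The claim is
`(n + 1)(|T|² - P - 3B) + 2 (n (|H|² + B) - P) ≥ 0`.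
-/

open Finset

section

variable {ι : Type*} [Fintype ι]

theorem sum_sq_sum_mul_le_sum_sq_mul {κ : Type*} [Fintype κ] (lam : ι → ℝ) (M : ι → κ → ℝ) :
    ∑ k, (∑ i, lam i * M i k) ^ 2 ≤ (∑ i, lam i ^ 2) * ∑ k, ∑ i, M i k ^ 2 := by
  rw [mul_sum]
  exact sum_le_sum fun k _ ↦ sum_mul_sq_le_sq_mul_sq univ lam (M · k)

variable [DecidableEq ι]

theorem sum_sum_erase_comm {M : Type*} [AddCommGroup M] (g : ι → ι → M) :
    ∑ k, ∑ i ∈ univ.erase k, g k i = ∑ k, ∑ i ∈ univ.erase k, g i k := by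
  simp only [sum_erase_eq_sub (mem_univ _), sum_sub_distrib]
  rw [sum_comm]

theorem sq_le_card_mul_sq_sum_add_sum_erase_sq (f : ι → ℝ) (k : ι) :
    f k ^ 2 ≤ Fintype.card ι * ((∑ i, f i) ^ 2 + ∑ i ∈ univ.erase k, f i ^ 2) := by
  set c : ι → ℝ := fun j ↦ if j = k then ∑ i, f i else -f j
  have hc : ∀ i ∈ univ.erase k, c i = -f i := fun i hi ↦ if_neg (ne_of_mem_erase hi)
  have hck : c k = ∑ i, f i := if_pos rfl
  have hsum : ∑ i, c i = f k := by
    rw [← add_sum_erase _ _ (mem_univ k), sum_congr rfl hc, hck, sum_neg_distrib,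
      ← add_sum_erase _ f (mem_univ k)]
    ring
  have hsum_sq : ∑ i, c i ^ 2 = (∑ i, f i) ^ 2 + ∑ i ∈ univ.erase k, f i ^ 2 := by
    rw [← add_sum_erase _ _ (mem_univ k), hck]
    congr 1
    exact sum_congr rfl fun i hi ↦ by rw [hc i hi, neg_sq]
  simpa [hsum, hsum_sq] using sq_sum_le_card_mul_sum_sq (s := univ) (f := c)

theorem sq_add_sum_erase_le_sum_sum_sq (T : ι → ι → ι → ℝ) (k : ι) :
    T k k k ^ 2 + ∑ i ∈ univ.erase k, (T i i k ^ 2 + T i k k ^ 2 + T k i k ^ 2) ≤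
      ∑ i, ∑ j, T i j k ^ 2 := by
  have hrow : ∀ i ∈ univ.erase k, T i i k ^ 2 + T i k k ^ 2 ≤ ∑ j, T i j k ^ 2 := fun i hi ↦ by
    rw [← sum_pair (f := (T i · k ^ 2)) (ne_of_mem_erase hi)]
    exact sum_le_sum_of_subset_of_nonneg (subset_univ _) fun _ _ _ ↦ sq_nonneg _
  rw [← add_sum_erase _ _ (mem_univ k), ← add_sum_erase _ (T k · k ^ 2) (mem_univ k),
    sum_add_distrib]
  linarith [sum_le_sum hrow]

theorem sum_diag_sq_add_three_mul_le_sum_sq (T : ι → ι → ι → ℝ)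
    (hsymm : ∀ i j k, T i j k = T j i k) (hsymm' : ∀ i j k, T i j k = T i k j) :
    ∑ k, T k k k ^ 2 + 3 * ∑ k, ∑ i ∈ univ.erase k, T i i k ^ 2 ≤
      ∑ k, ∑ i, ∑ j, T i j k ^ 2 := by
  have hT : ∀ i k, T i i k ^ 2 + T i k k ^ 2 + T k i k ^ 2 = T i i k ^ 2 + 2 * T k k i ^ 2 :=
    fun i k ↦ by rw [hsymm i k k, hsymm' k i k]; ring
  have h := sum_le_sum fun k (_ : k ∈ univ) ↦ sq_add_sum_erase_le_sum_sum_sq T k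
  simp only [hT, sum_add_distrib, ← mul_sum] at h
  rw [sum_sum_erase_comm fun k i ↦ T k k i ^ 2] at h
  linarith

theorem codazzi_estimate (T : ι → ι → ι → ℝ)
    (hsymm : ∀ i j k, T i j k = T j i k) (hsymm' : ∀ i j k, T i j k = T i k j) (lam : ι → ℝ) :
    (1 + 2 / ((Fintype.card ι : ℝ) + 1)) *
        ((∑ k, (∑ i, lam i * T i i k) ^ 2) / (∑ i, lam i ^ 2)) ≤
      (∑ k, ∑ i, ∑ j, T i j k ^ 2) +
        (2 * (Fintype.card ι : ℝ) / ((Fintype.card ι : ℝ) + 1)) * ∑ k, (∑ i, T i i k) ^ 2 := by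
  set n : ℝ := (Fintype.card ι : ℝ)
  set P := ∑ k, T k k k ^ 2
  set B := ∑ k, ∑ i ∈ univ.erase k, T i i k ^ 2
  set H := ∑ k, (∑ i, T i i k) ^ 2
  have hdiag : ∑ k, ∑ i, T i i k ^ 2 = P + B := by
    rw [← sum_add_distrib]
    exact sum_congr rfl fun k _ ↦ (add_sum_erase _ _ (mem_univ k)).symm
  have hCS : (∑ k, (∑ i, lam i * T i i k) ^ 2) / (∑ i, lam i ^ 2) ≤ P + B := by
    refine div_le_of_le_mul₀ (by positivity) (by positivity) ?_
    rw [← hdiag, mul_comm]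
    exact sum_sq_sum_mul_le_sum_sq_mul lam fun i k ↦ T i i k
  have hP : P ≤ n * (H + B) := by
    rw [mul_add, mul_sum, mul_sum, ← sum_add_distrib]
    refine sum_le_sum fun k _ ↦ ?_
    rw [← mul_add]
    exact sq_le_card_mul_sq_sum_add_sum_erase_sq (fun i ↦ T i i k) k
  have hS := sum_diag_sq_add_three_mul_le_sum_sq T hsymm hsymm'
  have hn : 0 ≤ n := Nat.cast_nonneg _
  calc (1 + 2 / (n + 1)) * ((∑ k, (∑ i, lam i * T i i k) ^ 2) / (∑ i, lam i ^ 2))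
      ≤ (1 + 2 / (n + 1)) * (P + B) := by gcongr
    _ ≤ (∑ k, ∑ i, ∑ j, T i j k ^ 2) + 2 * n / (n + 1) * H := by
      rw [← sub_nonneg]
      have : (∑ k, ∑ i, ∑ j, T i j k ^ 2) + 2 * n / (n + 1) * H - (1 + 2 / (n + 1)) * (P + B)
          = ((n + 1) * ((∑ k, ∑ i, ∑ j, T i j k ^ 2) - (P + 3 * B)) + 2 * (n * (H + B) - P))
            / (n + 1) := by
        field_simp
        ring
      rw [this]
      have := sub_nonneg.2 hS
      have := sub_nonneg.2 hP
      positivity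

end

theorem stmt_1_general (n : ℕ) (T : Fin n → Fin n → Fin n → ℝ)
    (hsymm : ∀ i j k, T i j k = T j i k) (hsymm' : ∀ i j k, T i j k = T i k j)
    (lam : Fin n → ℝ) :
    (1 + 2 / ((n : ℝ) + 1)) * ((∑ k, (∑ i, lam i * T i i k) ^ 2) / (∑ i, lam i ^ 2)) ≤
      (∑ k, ∑ i, ∑ j, T i j k ^ 2) +
        (2 * (n : ℝ) / ((n : ℝ) + 1)) * ∑ k, (∑ i, T i i k) ^ 2 := by
  simpa using codazzi_estimate T hsymm hsymm' lam

/-- Lemma 2.4, inequality (2.15): algebraic estimate for a fully symmetric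
(Codazzi) tensor `T`, with `H k = ∑ i, T i i k` and `D k = ∑ i, lam i * T i i k`. -/
theorem stmt_1 (n : ℕ) (hn : 1 ≤ n) (T : Fin n → Fin n → Fin n → ℝ)
    (hsymm : ∀ i j k, T i j k = T j i k) (hsymm' : ∀ i j k, T i j k = T i k j)
    (lam : Fin n → ℝ) (hZ : 0 < ∑ i, lam i ^ 2) :
    (1 + 2 / ((n : ℝ) + 1)) * ((∑ k, (∑ i, lam i * T i i k) ^ 2) / (∑ i, lam i ^ 2)) ≤
      (∑ k, ∑ i, ∑ j, T i j k ^ 2) +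
        (2 * (n : ℝ) / ((n : ℝ) + 1)) * ∑ k, (∑ i, T i i k) ^ 2 :=
  stmt_1_general n T hsymm hsymm' lam
end

section
/- Let $(h_{ij})$ be a symmetric $n\times n$ real matrix with eigenvalues $\lambda_1,\dots,\lambda_n$, and let $(T_{ijk})$ be fully symmetric in $i,j,k$. Suppose that at a point where $h_{ij}=\lambda_i\delta_{ij}$ the following equality conditions hold: (i) for each $k$ there exists $\alpha_k\in\mathbb{R}$ with $T_{iik}=\alpha_k\lambda_i$ for every $i$, and (ii) $T_{ijk}=0$ whenever $i\ne j$. Then by full symmetry, $T_{ijk}=0$ unless $i=j=k$; moreover, if the matrix $(h_{ij})$ has rank at least 2 (i.e., at least two $\lambda_i$ are nonzero), then $\alpha_k=0$ for all $k$, hence $T_{ijk}=0$ for all $i,j,k$ and $\sum_i T_{iik}=0$ for all $k$. -/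
open Finset

/-- Lemma 4.2 (algebraic dichotomy): equality case in Cauchy-Schwarz for a fully
symmetric tensor `T` proportional to the eigenvalues `lam` on the diagonal. -/
theorem stmt_3 (n : ℕ) (lam : Fin n → ℝ) (h : Fin n → Fin n → ℝ)
    (T : Fin n → Fin n → Fin n → ℝ)
    (hdiag : ∀ i j, h i j = if i = j then lam i else 0)
    (hsymm : ∀ i j k, T i j k = T j i k) (hsymm' : ∀ i j k, T i j k = T i k j)
    (α : Fin n → ℝ)
    (hprop : ∀ k i, T i i k = α k * lam i)
    (hoff : ∀ i j k, i ≠ j → T i j k = 0) :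
    (∀ i j k, ¬(i = j ∧ j = k) → T i j k = 0) ∧
    ((∃ i j, i ≠ j ∧ lam i ≠ 0 ∧ lam j ≠ 0) →
      (∀ k, α k = 0) ∧ (∀ i j k, T i j k = 0) ∧ ∀ k, ∑ i, T i i k = 0) := by

  have hzero : ∀ i j k, ¬(i = j ∧ j = k) → T i j k = 0 := by
    intro i j k hne
    by_cases hij : i = j
    · subst hij
      have hjk : i ≠ k := fun hk => hne ⟨rfl, hk⟩
      rw [hsymm']
      exact hoff i k i hjk
    · exact hoff i j k hij
  refine ⟨hzero, ?_⟩
  rintro ⟨i, j, hij, hli, hlj⟩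
  have hα : ∀ k, α k = 0 := by
    intro k
    by_cases hki : k = i
    · subst hki
      have := (hprop k j).symm.trans (hzero j j k (fun hc => hij (hc.2.symm)))
      exact (mul_eq_zero.mp this).resolve_right hlj
    · have := (hprop k i).symm.trans (hzero i i k (fun hc => hki (hc.2.symm)))
      exact (mul_eq_zero.mp this).resolve_right hli
  have hT : ∀ i j k, T i j k = 0 := by
    intro a b c
    by_cases hab : a = b
    · by_cases hbc : b = c
      · subst hab; subst hbc
        rw [hprop, hα, zero_mul]
      · exact hzero a b c (fun hc => hbc hc.2)
    · exact hzero a b c (fun hc => hab hc.1)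
  exact ⟨hα, hT, fun k => Finset.sum_eq_zero fun i _ => hT i i k⟩
end

section
/- Let $x:M^n\to\mathbb{R}^{n+p}$ be a self-shrinker with $H>0$ and parallel principal normal. Then $\tfrac12\mathcal{L}|Z|^2 = |Z|^2 - |Z|^4 + \sum_{i,j,k}(h^{n+p}_{ij,k})^2$, and hence $\mathcal{L}|Z| = |Z| - |Z|^3 + \frac{\sum_{i,j,k}(h^{n+p}_{ij,k})^2 - |\nabla|Z||^2}{|Z|}$ wherever $|Z|>0$. -/
open Finset

/-- Corollary 3.3: for a self-shrinker with `H > 0` and parallel principal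
normal, with `Z2 = |Z|²`, `Zn = |Z|`, `T i j k = h^{n+p}_{ij,k}`, `xe k = ⟨x,e_k⟩`,
`Dh i j = Δ h^{n+p}_{ij}` given by Lemma 2.3, one has
`½ ℒ|Z|² = |Z|² - |Z|⁴ + ∑ (h^{n+p}_{ij,k})²` and, where `|Z| > 0`,
`ℒ|Z| = |Z| - |Z|³ + (∑ (h_{ij,k})² - |∇|Z||²)/|Z|`. -/
theorem stmt_11 (n p : ℕ) (M : Type*)
    (h : M → Fin n → Fin n → ℝ) (T : M → Fin n → Fin n → Fin n → ℝ)
    (Dh : M → Fin n → Fin n → ℝ)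
    (Z2 Zn : M → ℝ) (xe : M → Fin n → ℝ)
    (Lap : (M → ℝ) → M → ℝ) (G : (M → ℝ) → M → Fin n → ℝ)
    (hZ2 : ∀ q, Z2 q = ∑ i, ∑ j, h q i j ^ 2)
    (hZn : ∀ q, Zn q = Real.sqrt (Z2 q))
    (hDh : ∀ q i j, Dh q i j = (∑ k, T q i j k * xe q k) + h q i j - Z2 q * h q i j)
    (hLapZ2 : ∀ q, Lap Z2 q =
      2 * (∑ i, ∑ j, h q i j * Dh q i j) + 2 * ∑ i, ∑ j, ∑ k, T q i j k ^ 2)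
    (hGZ2 : ∀ q k, G Z2 q k = 2 * ∑ i, ∑ j, h q i j * T q i j k)
    (hchainL : ∀ q, 0 < Zn q →
      Lap Zn q = Lap Z2 q / (2 * Zn q) - (∑ k, G Z2 q k ^ 2) / (4 * Zn q ^ 3))
    (hchainG : ∀ q k, 0 < Zn q → G Zn q k = G Z2 q k / (2 * Zn q)) :
    (∀ q, (1 / 2) * (Lap Z2 q - ∑ k, xe q k * G Z2 q k) =
      Z2 q - Z2 q ^ 2 + ∑ i, ∑ j, ∑ k, T q i j k ^ 2) ∧
    (∀ q, 0 < Zn q →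
      Lap Zn q - ∑ k, xe q k * G Zn q k =
        Zn q - Zn q ^ 3 +
          ((∑ i, ∑ j, ∑ k, T q i j k ^ 2) - ∑ k, G Zn q k ^ 2) / Zn q) := by
  have key : ∀ q, (1 / 2) * (Lap Z2 q - ∑ k, xe q k * G Z2 q k) =
      Z2 q - Z2 q ^ 2 + ∑ i, ∑ j, ∑ k, T q i j k ^ 2 := by
    intro q
    have e : ∀ i j, h q i j * Dh q i j =
        (∑ k, h q i j * (T q i j k * xe q k)) + h q i j ^ 2 - Z2 q * h q i j ^ 2 := by
      intro i j
      rw [hDh, mul_sub, mul_add, Finset.mul_sum]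
      ring
    have h1 : ∑ i, ∑ j, h q i j * Dh q i j =
        (∑ i, ∑ j, ∑ k, h q i j * (T q i j k * xe q k)) + Z2 q - Z2 q * Z2 q := by
      calc ∑ i, ∑ j, h q i j * Dh q i j
          = ∑ i, ∑ j, ((∑ k, h q i j * (T q i j k * xe q k)) + h q i j ^ 2
              - Z2 q * h q i j ^ 2) :=
            Finset.sum_congr rfl fun i _ => Finset.sum_congr rfl fun j _ => e i j
        _ = (∑ i, ∑ j, ∑ k, h q i j * (T q i j k * xe q k)) + Z2 q - Z2 q * Z2 q := by
            simp only [Finset.sum_sub_distrib, Finset.sum_add_distrib, ← Finset.mul_sum,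
              ← hZ2]
    have h2 : ∑ k, xe q k * G Z2 q k =
        2 * ∑ i, ∑ j, ∑ k, h q i j * (T q i j k * xe q k) := by
      simp only [hGZ2, Finset.mul_sum]
      rw [Finset.sum_comm]
      refine Finset.sum_congr rfl fun i _ => ?_
      rw [Finset.sum_comm]
      exact Finset.sum_congr rfl fun j _ => Finset.sum_congr rfl fun k _ => by ring
    rw [hLapZ2, h1, h2]; ring
  refine ⟨key, fun q hq => ?_⟩
  have hne : Zn q ≠ 0 := ne_of_gt hq
  have hZ2pos : Z2 q = Zn q ^ 2 := by
    have h0 : 0 ≤ Z2 q := by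
      rw [hZ2]
      exact Finset.sum_nonneg fun i _ => Finset.sum_nonneg fun j _ => sq_nonneg _
    rw [hZn, sq, Real.mul_self_sqrt h0]
  have hLZ := key q
  rw [hZ2pos] at hLZ
  have hGsum : ∑ k, G Zn q k ^ 2 = (∑ k, G Z2 q k ^ 2) / (4 * Zn q ^ 2) := by
    rw [Finset.sum_div]
    refine Finset.sum_congr rfl fun k _ => ?_
    rw [hchainG q k hq, div_pow]
    congr 1
    ring
  have hxG : ∑ k, xe q k * G Zn q k = (∑ k, xe q k * G Z2 q k) / (2 * Zn q) := by
    rw [Finset.sum_div]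
    exact Finset.sum_congr rfl fun k _ => by rw [hchainG q k hq]; ring
  have hL2 : Lap Z2 q = (∑ k, xe q k * G Z2 q k)
      + 2 * (Zn q ^ 2 - (Zn q ^ 2) ^ 2 + ∑ i, ∑ j, ∑ k, T q i j k ^ 2) := by
    linarith [hLZ]
  rw [hchainL q hq, hL2, hxG, hGsum]
  field_simp
  ring
end
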